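/- Let G be a finite undirected graph with normalized Laplacian second-smallest eigenvalue λ₂, and W a subset of vertices. Then the number of edges internal to W satisfies E(W) ≤ (1/2) · vol(W) · (1 − λ₂ · (1 − vol(W)/vol(G))). -/

import Mathlib

/-!
With `s = D^{1/2} 1` and `g = D^{1/2} 1_W`, the normalized Laplacian is `D^{-1/2} L D^{-1/2}`
plus the identity on isolated vertices. Hence it is positive semidefinite, it kills `s`, and its
quadratic form at `g` is that of the combinatorial Laplacian `L` at `1_W`, namely
`vol W - #{ordered edges inside W}`. Project `g` orthogonally to `s` and expand in an
eigenbasis: `s` is a `0`-eigenvector and at most one eigenvalue (with multiplicity) lies below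
`λ₂`, so the projection only sees eigenvalues `≥ λ₂`. This gives
`λ₂ (vol W - vol W ^ 2 / vol G) ≤ vol W - #{ordered edges inside W}`, which rearranges to the claim.
-/

open Finset

/-- Normalized Laplacian `L = I − D^{-1/2} A D^{-1/2}` of a finite simple graph. -/
noncomputable def normLap {V : Type*} [Fintype V] [DecidableEq V]
    (G : SimpleGraph V) [DecidableRel G.Adj] : Matrix V V ℝ :=
  let Dh : Matrix V V ℝ :=
    Matrix.diagonal fun v => if G.degree v = 0 then 0 else (Real.sqrt (G.degree v))⁻¹
  1 - Dh * G.adjMatrix ℝ * Dh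

/-- The second smallest eigenvalue (with multiplicity) of a Hermitian real matrix. -/
noncomputable def secondEig {V : Type*} [Fintype V] [DecidableEq V]
    (M : Matrix V V ℝ) (hM : M.IsHermitian) : ℝ :=
  ((Finset.univ.val.map hM.eigenvalues).sort (· ≤ ·)).getD 1 0

open Matrix

theorem card_filter_lt_sort_getD_one_le_one {ι : Type*} [Fintype ι] (f : ι → ℝ) :
    #{i | f i < ((univ.val.map f).sort (· ≤ ·)).getD 1 0} ≤ 1 := by
  have hcard : #{i | f i < ((univ.val.map f).sort (· ≤ ·)).getD 1 0} =
      ((univ.val.map f).sort (· ≤ ·)).countP (· < ((univ.val.map f).sort (· ≤ ·)).getD 1 0) := by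
    rw [← Multiset.coe_countP, Multiset.sort_eq, Multiset.countP_map]
    rfl
  rw [hcard]
  generalize hl : (univ.val.map f).sort (· ≤ ·) = l
  have hsorted : l.Pairwise (· ≤ ·) := hl ▸ Multiset.pairwise_sort _ _
  match l, hsorted with
  | [], _ | [_], _ => exact List.countP_le_length.trans (by simp)
  | a :: b :: rest, hsorted =>
    have hrest : rest.countP (· < b) = 0 :=
      List.countP_eq_zero.mpr fun c hc => by
        simpa using (List.pairwise_cons.mp (List.pairwise_cons.mp hsorted).2).1 c hc
    simp only [List.getD_cons_succ, List.getD_cons_zero, List.countP_cons, hrest, lt_irrefl,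
      decide_false, Bool.false_eq_true, if_false, zero_add, add_zero]
    split <;> simp

namespace Matrix.IsHermitian

variable {V : Type*} [Fintype V] {M : Matrix V V ℝ}

theorem dotProduct_mulVec_comm (hM : M.IsHermitian) (v w : V → ℝ) :
    v ⬝ᵥ (M *ᵥ w) = (M *ᵥ v) ⬝ᵥ w := by
  rw [dotProduct_mulVec, ← mulVec_transpose, ← conjTranspose_eq_transpose_of_trivial, hM.eq]

variable [DecidableEq V]

theorem dotProduct_eq_sum_eigenvectorBasis (hM : M.IsHermitian) (x z : V → ℝ) :
    x ⬝ᵥ z = ∑ i, (⇑(hM.eigenvectorBasis i) ⬝ᵥ x) * (⇑(hM.eigenvectorBasis i) ⬝ᵥ z) := by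
  have := hM.eigenvectorBasis.sum_inner_mul_inner (WithLp.toLp 2 x) (WithLp.toLp 2 z)
  simp only [EuclideanSpace.inner_eq_star_dotProduct, star_trivial] at this
  simpa [dotProduct_comm] using this.symm

theorem eigenvectorBasis_dotProduct_mulVec (hM : M.IsHermitian) (i : V) (x : V → ℝ) :
    ⇑(hM.eigenvectorBasis i) ⬝ᵥ (M *ᵥ x) =
      hM.eigenvalues i * (⇑(hM.eigenvectorBasis i) ⬝ᵥ x) := by
  rw [hM.dotProduct_mulVec_comm, mulVec_eigenvectorBasis, smul_dotProduct, smul_eq_mul]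

theorem eq_of_eigenvalues_lt_secondEig (hM : M.IsHermitian) {i j : V}
    (hi : hM.eigenvalues i < secondEig M hM) (hj : hM.eigenvalues j < secondEig M hM) : i = j :=
  card_le_one.mp (card_filter_lt_sort_getD_one_le_one hM.eigenvalues) i
    (mem_filter.mpr ⟨mem_univ i, hi⟩) j (mem_filter.mpr ⟨mem_univ j, hj⟩)

theorem secondEig_mul_dotProduct_self_le (hM : M.IsHermitian) {c : ℝ}
    (hc : ∀ i, c ≤ hM.eigenvalues i) {y : V → ℝ} (hy : y ≠ 0) (hMy : M *ᵥ y = c • y)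
    {x : V → ℝ} (hyx : y ⬝ᵥ x = 0) :
    secondEig M hM * (x ⬝ᵥ x) ≤ x ⬝ᵥ (M *ᵥ x) := by
  set b : V → V → ℝ := fun i => ⇑(hM.eigenvectorBasis i)
  have hcoeff (i : V) (hi : hM.eigenvalues i < secondEig M hM) : b i ⬝ᵥ x = 0 := by
    -- `y` only has components along eigenvalue `c ≤ μᵢ < λ₂`, so it is a multiple of `b i`.
    have hy_eq (k : V) (hk : b k ⬝ᵥ y ≠ 0) : k = i := by
      have : hM.eigenvalues k = c := by
        have := hM.eigenvectorBasis_dotProduct_mulVec k y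
        rw [hMy, dotProduct_smul, smul_eq_mul] at this
        exact (mul_right_cancel₀ hk this).symm
      exact hM.eq_of_eigenvalues_lt_secondEig (by rw [this]; exact (hc i).trans_lt hi) hi
    obtain ⟨k, hk⟩ : ∃ k, b k ⬝ᵥ y ≠ 0 := by
      by_contra! h
      refine hy (dotProduct_self_eq_zero.mp ?_)
      simp [hM.dotProduct_eq_sum_eigenvectorBasis y y, b, h]
    obtain rfl := hy_eq k hk
    rw [hM.dotProduct_eq_sum_eigenvectorBasis, sum_eq_single k (fun j _ hj => by
      rw [not_imp_comm.mp (hy_eq j) hj, zero_mul]) (by simp)] at hyx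
    exact (mul_eq_zero.mp hyx).resolve_left hk
  rw [hM.dotProduct_eq_sum_eigenvectorBasis x x, hM.dotProduct_eq_sum_eigenvectorBasis x, mul_sum]
  refine sum_le_sum fun i _ => ?_
  rw [hM.eigenvectorBasis_dotProduct_mulVec]
  rcases lt_or_ge (hM.eigenvalues i) (secondEig M hM) with hi | hi
  · simp [b, hcoeff i hi]
  · nlinarith [mul_self_nonneg (b i ⬝ᵥ x)]

theorem secondEig_mul_le_of_posSemidef (hM : M.IsHermitian) (hPSD : M.PosSemidef) {y : V → ℝ}
    (hy : y ≠ 0) (hMy : M *ᵥ y = 0) (x : V → ℝ) :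
    secondEig M hM * (x ⬝ᵥ x - (y ⬝ᵥ x) ^ 2 / (y ⬝ᵥ y)) ≤ x ⬝ᵥ (M *ᵥ x) := by
  set t := (y ⬝ᵥ x) / (y ⬝ᵥ y)
  have hyy : y ⬝ᵥ y ≠ 0 := fun h => hy (dotProduct_self_eq_zero.mp h)
  have horth : y ⬝ᵥ (x - t • y) = 0 := by
    rw [dotProduct_sub, dotProduct_smul, smul_eq_mul, div_mul_cancel₀ _ hyy, sub_self]
  have hnorm : (x - t • y) ⬝ᵥ (x - t • y) = x ⬝ᵥ x - (y ⬝ᵥ x) ^ 2 / (y ⬝ᵥ y) := by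
    simp only [sub_dotProduct, dotProduct_sub, smul_dotProduct, dotProduct_smul, smul_eq_mul,
      dotProduct_comm x y, t]
    field_simp
    ring
  have hform : (x - t • y) ⬝ᵥ (M *ᵥ (x - t • y)) = x ⬝ᵥ (M *ᵥ x) := by
    rw [mulVec_sub, mulVec_smul, hMy, smul_zero, sub_zero, sub_dotProduct, smul_dotProduct,
      hM.dotProduct_mulVec_comm y, hMy, zero_dotProduct, smul_zero, sub_zero]
  have := hM.secondEig_mul_dotProduct_self_le (c := 0) hPSD.eigenvalues_nonneg hy
    (by rw [hMy, zero_smul]) horth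
  rwa [hnorm, hform] at this

end Matrix.IsHermitian

namespace SimpleGraph

variable {V : Type*} [Fintype V] (G : SimpleGraph V) [DecidableRel G.Adj]

noncomputable def sqrtDegree : V → ℝ := fun v => √(G.degree v)

theorem sqrtDegree_ne_zero_of_adj {v w : V} (h : G.Adj v w) : G.sqrtDegree v ≠ 0 :=
  (Real.sqrt_pos.mpr (Nat.cast_pos.mpr ((G.degree_pos_iff_exists_adj v).mpr ⟨w, h⟩))).ne'

variable [DecidableEq V]

theorem normLap_eq_lapMatrix :
    normLap G = diagonal G.sqrtDegree⁻¹ * G.lapMatrix ℝ * diagonal G.sqrtDegree⁻¹ +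
      diagonal fun v => if G.degree v = 0 then 1 else 0 := by
  have hDh :
      (fun v => if G.degree v = 0 then 0 else (√(G.degree v : ℝ))⁻¹) = G.sqrtDegree⁻¹ := by
    ext v; split_ifs with h <;> simp [sqrtDegree, h]
  have hdiag : diagonal (G.sqrtDegree⁻¹ * (fun v => (G.degree v : ℝ)) * G.sqrtDegree⁻¹) +
      (diagonal fun v => if G.degree v = 0 then 1 else 0) = 1 := by
    rw [diagonal_add, ← diagonal_one]
    congr 1; ext v
    by_cases h : G.degree v = 0
    · simp [h]
    · simp only [Pi.mul_apply, Pi.inv_apply, sqrtDegree, h, if_false, add_zero]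
      have : (0 : ℝ) < √(G.degree v) := Real.sqrt_pos.mpr (by positivity)
      field_simp
      exact (Real.sq_sqrt (Nat.cast_nonneg _)).symm
  simp only [normLap, hDh, lapMatrix, degMatrix, mul_sub, sub_mul, diagonal_mul_diagonal, ← hdiag]
  rw [sub_add_eq_add_sub]
  rfl

theorem posSemidef_normLap : (normLap G).PosSemidef := by
  rw [normLap_eq_lapMatrix]
  refine .add ?_ (posSemidef_diagonal_iff.mpr fun v => by positivity)
  simpa using (posSemidef_lapMatrix ℝ G).conjTranspose_mul_mul_same (diagonal G.sqrtDegree⁻¹)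

theorem dotProduct_lapMatrix_mulVec_congr {f g : V → ℝ} (h : ∀ v w, G.Adj v w → f v = g v) :
    f ⬝ᵥ (G.lapMatrix ℝ *ᵥ f) = g ⬝ᵥ (G.lapMatrix ℝ *ᵥ g) := by
  simp only [← toLinearMap₂'_apply', lapMatrix_toLinearMap₂']
  congr 1
  refine sum_congr rfl fun v _ => sum_congr rfl fun w _ => ?_
  split_ifs with hvw
  · rw [h v w hvw, h w v hvw.symm]
  · rfl

theorem dotProduct_normLap_mulVec_sqrtDegree_mul (f : V → ℝ) :
    (G.sqrtDegree * f) ⬝ᵥ (normLap G *ᵥ (G.sqrtDegree * f)) = f ⬝ᵥ (G.lapMatrix ℝ *ᵥ f) := by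
  have hiso :
      (diagonal fun v => if G.degree v = 0 then (1 : ℝ) else 0) *ᵥ (G.sqrtDegree * f) = 0 := by
    ext v
    by_cases h : G.degree v = 0 <;> simp [mulVec_diagonal, h, sqrtDegree]
  rw [normLap_eq_lapMatrix, add_mulVec, hiso, add_zero, ← mulVec_mulVec, ← mulVec_mulVec,
    dotProduct_mulVec, ← mulVec_transpose, diagonal_transpose]
  refine G.dotProduct_lapMatrix_mulVec_congr fun v w h => ?_
  rw [mulVec_diagonal, Pi.mul_apply, Pi.inv_apply,
    inv_mul_cancel_left₀ (G.sqrtDegree_ne_zero_of_adj h)]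

theorem normLap_mulVec_sqrtDegree : normLap G *ᵥ G.sqrtDegree = 0 := by
  refine ((posSemidef_normLap G).dotProduct_mulVec_zero_iff _).mp ?_
  have := G.dotProduct_normLap_mulVec_sqrtDegree_mul 1
  rwa [mul_one, Pi.one_def, lapMatrix_mulVec_const_eq_zero, dotProduct_zero] at this

theorem dotProduct_lapMatrix_mulVec_indicator (W : Finset V) :
    (fun v => if v ∈ W then 1 else 0) ⬝ᵥ (G.lapMatrix ℝ *ᵥ fun v => if v ∈ W then 1 else 0) =
      ∑ v ∈ W, (G.degree v : ℝ) - #{p : V × V | G.Adj p.1 p.2 ∧ p.1 ∈ W ∧ p.2 ∈ W} := by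
  rw [lapMatrix, sub_mulVec, dotProduct_sub, dotProduct_mulVec_degMatrix,
    dotProduct_mulVec_adjMatrix]
  congr 1
  · simp [mul_ite]
  · rw [card_filter, Nat.cast_sum, ← Fintype.sum_prod_type']
    refine sum_congr rfl fun p _ => ?_
    by_cases h₁ : p.1 ∈ W <;> by_cases h₂ : p.2 ∈ W <;> simp [h₁, h₂]

end SimpleGraph

/-- the number of edges internal to `W` (counted here as half the number
of ordered adjacent pairs inside `W`) satisfies
`E(W) ≤ (1/2)·vol(W)·(1 − λ₂·(1 − vol(W)/vol(G)))`. -/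
theorem stmt_1 {V : Type*} [Fintype V] [DecidableEq V]
    (G : SimpleGraph V) [DecidableRel G.Adj]
    (hL : (normLap G).IsHermitian) (lam2 : ℝ) (hlam : lam2 = secondEig (normLap G) hL)
    (W : Finset V) :
    ((Finset.univ.filter fun p : V × V => G.Adj p.1 p.2 ∧ p.1 ∈ W ∧ p.2 ∈ W).card : ℝ) / 2 ≤
      (1 / 2) * (∑ v ∈ W, (G.degree v : ℝ)) *
        (1 - lam2 * (1 - (∑ v ∈ W, (G.degree v : ℝ)) / (∑ v : V, (G.degree v : ℝ)))) := by
  set vol := ∑ v ∈ W, (G.degree v : ℝ)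
  set m := ∑ v : V, (G.degree v : ℝ)
  set F := ((Finset.univ.filter fun p : V × V => G.Adj p.1 p.2 ∧ p.1 ∈ W ∧ p.2 ∈ W).card : ℝ)
  set g := G.sqrtDegree * fun v => if v ∈ W then 1 else 0
  have hform : g ⬝ᵥ (normLap G *ᵥ g) = vol - F := by
    rw [G.dotProduct_normLap_mulVec_sqrtDegree_mul, G.dotProduct_lapMatrix_mulVec_indicator]
  have hss : G.sqrtDegree ⬝ᵥ G.sqrtDegree = m := by simp [dotProduct, SimpleGraph.sqrtDegree, m]
  have hsg : G.sqrtDegree ⬝ᵥ g = vol := by simp [dotProduct, g, SimpleGraph.sqrtDegree, vol]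
  have hgg : g ⬝ᵥ g = vol := by simp [dotProduct, g, SimpleGraph.sqrtDegree, vol]
  by_cases hm : m = 0
  · have hvol : vol = 0 :=
      le_antisymm (hm ▸ sum_le_univ_sum_of_nonneg fun v => Nat.cast_nonneg _)
        (sum_nonneg fun v _ => Nat.cast_nonneg _)
    have hF : F ≤ vol :=
      sub_nonneg.mp (hform ▸ G.posSemidef_normLap.dotProduct_mulVec_nonneg g)
    have : 0 ≤ F := Nat.cast_nonneg _
    rw [hvol]; linarith
  have key := hL.secondEig_mul_le_of_posSemidef G.posSemidef_normLap
    (fun h => hm (by rw [← hss, h, zero_dotProduct])) G.normLap_mulVec_sqrtDegree g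
  rw [hform, hss, hsg, hgg, ← hlam] at key
  have : vol * (1 - lam2 * (1 - vol / m)) = vol - lam2 * (vol - vol ^ 2 / m) := by ring
  linarith
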